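/- Let K be the field of fractions of ℚ[x₀,x₁,x₂,x₃,x₄,x₅] and set A = (x₂x₄+x₃x₅)/(x₀x₁), B = (x₁x₄+x₀x₅)/(x₂x₃), C = (x₀x₂+x₁x₃)/(x₄x₅). Then for all integers a₁,b₁,c₁,a₂,b₂,c₂,a₃,b₃,c₃, the following identity holds in K: ((x₂A^{a₂}B^{b₂}C^{c₂})·(x₄A^{a₃}B^{b₃}C^{c₃}) + (x₃A^{a₂}B^{b₂}C^{c₂})·(x₅A^{a₃}B^{b₃}C^{c₃})) / (x₀A^{a₁}B^{b₁}C^{c₁}) = x₁·A^{a₂+a₃−a₁+1}·B^{b₂+b₃−b₁}·C^{c₂+c₃−c₁}, where the exponents are integer powers in the field K. -/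
import Mathlib


noncomputable section

/-- The polynomial ring ℚ[x₀,…,x₅]. -/
abbrev P : Type := MvPolynomial (Fin 6) ℚ

/-- K = Frac(ℚ[x₀,…,x₅]). -/
abbrev K : Type := FractionRing P

/-- The images of the variables x₀,…,x₅ in K. -/
def x (i : Fin 6) : K := algebraMap P K (MvPolynomial.X i)

/-- τ'₁ : replaces (v₀, v₁) by ((v₂v₄+v₃v₅)/v₁, (v₂v₄+v₃v₅)/v₀). -/
def tau1 (v : Fin 6 → K) : Fin 6 → K := fun k =>
  if k = 0 then (v 2 * v 4 + v 3 * v 5) / v 1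
  else if k = 1 then (v 2 * v 4 + v 3 * v 5) / v 0
  else v k

/-- τ'₂ : replaces (v₂, v₃) by ((v₁v₄+v₀v₅)/v₃, (v₁v₄+v₀v₅)/v₂). -/
def tau2 (v : Fin 6 → K) : Fin 6 → K := fun k =>
  if k = 2 then (v 1 * v 4 + v 0 * v 5) / v 3
  else if k = 3 then (v 1 * v 4 + v 0 * v 5) / v 2
  else v k

/-- τ'₃ : replaces (v₄, v₅) by ((v₀v₂+v₁v₃)/v₅, (v₀v₂+v₁v₃)/v₄). -/
def tau3 (v : Fin 6 → K) : Fin 6 → K := fun k =>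
  if k = 4 then (v 0 * v 2 + v 1 * v 3) / v 5
  else if k = 5 then (v 0 * v 2 + v 1 * v 3) / v 4
  else v k

/-- τ' indexed by Fin 3: `tau i` is τ'_{i+1}. -/
def tau : Fin 3 → (Fin 6 → K) → (Fin 6 → K)
  | 0 => tau1
  | 1 => tau2
  | 2 => tau3

/-- The initial labeled seed X = (x₀,…,x₅). -/
def X0 : Fin 6 → K := x

/-- Apply the maps τ'₍a₁₎, …, τ'₍aₙ₎ along the word `w` in left-to-right order. -/
def applyWord (w : List (Fin 3)) (v : Fin 6 → K) : Fin 6 → K :=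
  w.foldl (fun u a => tau a u) v

/-- A = (x₂x₄+x₃x₅)/(x₀x₁). -/
def A : K := (x 2 * x 4 + x 3 * x 5) / (x 0 * x 1)

/-- B = (x₁x₄+x₀x₅)/(x₂x₃). -/
def B : K := (x 1 * x 4 + x 0 * x 5) / (x 2 * x 3)

/-- C = (x₀x₂+x₁x₃)/(x₄x₅). -/
def C : K := (x 0 * x 2 + x 1 * x 3) / (x 4 * x 5)

lemma x_ne (i : Fin 6) : x i ≠ 0 := by
  simp only [x]
  rw [map_ne_zero_iff _ (IsFractionRing.injective P K)]
  exact MvPolynomial.X_ne_zero i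

lemma alg_ne {p : P} (h : p ≠ 0) : algebraMap P K p ≠ 0 := by
  rwa [map_ne_zero_iff _ (IsFractionRing.injective P K)]

lemma poly_ne (i j k l : Fin 6) :
    (MvPolynomial.X i * MvPolynomial.X j + MvPolynomial.X k * MvPolynomial.X l : P) ≠ 0 := by
  intro h
  have := congrArg (MvPolynomial.eval (fun _ => (1:ℚ))) h
  simp at this

lemma num_ne (i j k l : Fin 6) : x i * x j + x k * x l ≠ 0 := by
  have : x i * x j + x k * x l =
      algebraMap P K (MvPolynomial.X i * MvPolynomial.X j + MvPolynomial.X k * MvPolynomial.X l) := by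
    simp [x, map_add, map_mul]
  rw [this]
  exact alg_ne (poly_ne i j k l)

lemma A_ne : A ≠ 0 :=
  div_ne_zero (num_ne 2 4 3 5) (mul_ne_zero (x_ne 0) (x_ne 1))

lemma B_ne : B ≠ 0 :=
  div_ne_zero (num_ne 1 4 0 5) (mul_ne_zero (x_ne 2) (x_ne 3))

lemma C_ne : C ≠ 0 :=
  div_ne_zero (num_ne 0 2 1 3) (mul_ne_zero (x_ne 4) (x_ne 5))

lemma key : x 2 * x 4 + x 3 * x 5 = A * (x 0 * x 1) := by
  rw [A, div_mul_cancel₀]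
  exact mul_ne_zero (x_ne 0) (x_ne 1)

/-- The exchange-relation computation from the proof of Proposition 2.4:
mutating at vertex 0 of a cluster in τ-presentation yields a new variable in
τ-presentation with exponents (a₂+a₃−a₁+1, b₂+b₃−b₁, c₂+c₃−c₁). -/
theorem exchange_relation (a₁ b₁ c₁ a₂ b₂ c₂ a₃ b₃ c₃ : ℤ) :
    ((x 2 * A ^ a₂ * B ^ b₂ * C ^ c₂) * (x 4 * A ^ a₃ * B ^ b₃ * C ^ c₃) +
        (x 3 * A ^ a₂ * B ^ b₂ * C ^ c₂) * (x 5 * A ^ a₃ * B ^ b₃ * C ^ c₃)) /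
      (x 0 * A ^ a₁ * B ^ b₁ * C ^ c₁) =
    x 1 * A ^ (a₂ + a₃ - a₁ + 1) * B ^ (b₂ + b₃ - b₁) * C ^ (c₂ + c₃ - c₁) := by
  have hA := A_ne; have hB := B_ne; have hC := C_ne
  have h0 := x_ne 0
  have hden : x 0 * A ^ a₁ * B ^ b₁ * C ^ c₁ ≠ 0 :=
    mul_ne_zero (mul_ne_zero (mul_ne_zero h0 (zpow_ne_zero _ hA)) (zpow_ne_zero _ hB))
      (zpow_ne_zero _ hC)
  have hnum : (x 2 * A ^ a₂ * B ^ b₂ * C ^ c₂) * (x 4 * A ^ a₃ * B ^ b₃ * C ^ c₃) +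
      (x 3 * A ^ a₂ * B ^ b₂ * C ^ c₂) * (x 5 * A ^ a₃ * B ^ b₃ * C ^ c₃) =
      (x 0 * A ^ a₁ * B ^ b₁ * C ^ c₁) *
        (x 1 * A ^ (a₂ + a₃ - a₁ + 1) * B ^ (b₂ + b₃ - b₁) * C ^ (c₂ + c₃ - c₁)) := by
    calc (x 2 * A ^ a₂ * B ^ b₂ * C ^ c₂) * (x 4 * A ^ a₃ * B ^ b₃ * C ^ c₃) +
        (x 3 * A ^ a₂ * B ^ b₂ * C ^ c₂) * (x 5 * A ^ a₃ * B ^ b₃ * C ^ c₃)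
        = (x 2 * x 4 + x 3 * x 5) * (A ^ a₂ * A ^ a₃) * (B ^ b₂ * B ^ b₃) *
            (C ^ c₂ * C ^ c₃) := by ring
      _ = A * (x 0 * x 1) * A ^ (a₂ + a₃) * B ^ (b₂ + b₃) * C ^ (c₂ + c₃) := by
          rw [key, ← zpow_add₀ hA, ← zpow_add₀ hB, ← zpow_add₀ hC]
      _ = x 0 * x 1 * A ^ (a₂ + a₃ + 1) * B ^ (b₂ + b₃) * C ^ (c₂ + c₃) := by
          rw [zpow_add₀ hA (a₂ + a₃) 1, zpow_one]; ring
      _ = (x 0 * A ^ a₁ * B ^ b₁ * C ^ c₁) *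
            (x 1 * A ^ (a₂ + a₃ - a₁ + 1) * B ^ (b₂ + b₃ - b₁) * C ^ (c₂ + c₃ - c₁)) := by
          rw [show a₂ + a₃ + 1 = a₁ + (a₂ + a₃ - a₁ + 1) by ring,
            show b₂ + b₃ = b₁ + (b₂ + b₃ - b₁) by ring,
            show c₂ + c₃ = c₁ + (c₂ + c₃ - c₁) by ring,
            zpow_add₀ hA, zpow_add₀ hB, zpow_add₀ hC]
          ring
  rw [hnum, mul_div_cancel_left₀ _ hden]
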